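/- arXiv:2206.11594 — 2 statements merged into one kernel-verified Lean document; each statement's English description precedes it below -/
import Mathlib

section
/- Let L be an even lattice, M ⊆ L a primitive sublattice on which the bilinear form is non-degenerate, and N = M^⊥ its orthogonal complement in L. Then the length of the discriminant group of N satisfies ℓ(N^♯) ≤ ℓ(M^♯) + ℓ(L^♯). -/
open Matrix

/- A lattice of rank `m` is modelled, via a choice of basis, as `ℤ^m = Fin m → ℤ`
equipped with the non-degenerate symmetric bilinear form given by a Gram matrix `S`. -/

variable {m : ℕ}

/-- The bilinear form associated with the Gram matrix `S`. -/
def BM (S : Matrix (Fin m) (Fin m) ℤ) (v w : Fin m → ℤ) : ℤ := v ⬝ᵥ (S *ᵥ w)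

/-- The invariant sublattice `L^g = {v ∈ L : g v = v}` of an automorphism `g`. -/
def invM (g : (Fin m → ℤ) ≃ₗ[ℤ] (Fin m → ℤ)) : Submodule ℤ (Fin m → ℤ) where
  carrier := {v | g v = v}
  add_mem' := by intro a b ha hb; simp only [Set.mem_setOf_eq, map_add] at *; rw [ha, hb]
  zero_mem' := by simp
  smul_mem' := by intro c a ha; simp only [Set.mem_setOf_eq, _root_.map_smul] at *; rw [ha]

/-- The orthogonal complement `M^⊥ = {v ∈ L : v·w = 0 for all w ∈ M}` of a sublattice. -/
def orthoM (S : Matrix (Fin m) (Fin m) ℤ) (M : Submodule ℤ (Fin m → ℤ)) :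
    Submodule ℤ (Fin m → ℤ) where
  carrier := {v | ∀ w ∈ M, BM S v w = 0}
  add_mem' := by
    intro a b ha hb w hw
    simp only [BM, add_dotProduct] at *
    rw [ha w hw, hb w hw, add_zero]
  zero_mem' := by intro w hw; simp [BM]
  smul_mem' := by
    intro c a ha w hw
    simp only [BM, smul_dotProduct] at *
    rw [ha w hw, smul_zero]

/-- The coinvariant sublattice `L_g = (L^g)^⊥`. -/
def coinvM (S : Matrix (Fin m) (Fin m) ℤ) (g : (Fin m → ℤ) ≃ₗ[ℤ] (Fin m → ℤ)) :
    Submodule ℤ (Fin m → ℤ) :=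
  orthoM S (invM g)

/-- `g` is an isometry with respect to the Gram matrix `S`. -/
def IsIsomM (S : Matrix (Fin m) (Fin m) ℤ) (g : (Fin m → ℤ) ≃ₗ[ℤ] (Fin m → ℤ)) : Prop :=
  ∀ v w, BM S (g v) (g w) = BM S v w

/-- The bilinear form of the Gram matrix `S` as a bundled bilinear map. -/
def bilinMap (S : Matrix (Fin m) (Fin m) ℤ) :
    (Fin m → ℤ) →ₗ[ℤ] (Fin m → ℤ) →ₗ[ℤ] ℤ :=
  LinearMap.mk₂ ℤ (BM S)
    (fun a b w => by rw [BM, BM, BM, add_dotProduct])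
    (fun c a w => by rw [BM, BM, smul_dotProduct])
    (fun a w w' => by rw [BM, BM, BM, mulVec_add, dotProduct_add])
    (fun c a w => by rw [BM, BM, mulVec_smul, dotProduct_smul])

/-- The discriminant group `M^♯ = M^∨/M` of a sublattice `M` (with the restricted form),
realized as the cokernel of the map `M → Hom(M,ℤ)`, `x ↦ (y ↦ x·y)`; for a non-degenerate
form this cokernel is canonically isomorphic to `M^∨/M`. -/
abbrev discGroup (S : Matrix (Fin m) (Fin m) ℤ) (M : Submodule ℤ (Fin m → ℤ)) :=
  (↥M →ₗ[ℤ] ℤ) ⧸ LinearMap.range ((bilinMap S).domRestrict₁₂ M M)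

/-- The length of an abelian group: the minimal number of generators. -/
noncomputable def glength (A : Type*) [AddCommGroup A] [Module ℤ A] : ℕ :=
  sInf {n | ∃ s : Finset A, s.card = n ∧ Submodule.span ℤ (s : Set A) = ⊤}

/-! For a sublattice `K` write `φ_K : L → K^♯` (`toDiscGroup S K`) for `x ↦ [y ↦ x·y]`;
its kernel is `K + K^⊥`. Since `M` is primitive and the form is non-degenerate, `N^⊥ = M`
(an argument over `ℚ`), so `φ_N` and `φ_M` both have kernel `M + N`. Hence the image `A` of
`φ_N` embeds into `M^♯`, and `ℓ(A) ≤ ℓ(M^♯)` because subgroups of finitely generated abelian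
groups need no more generators. As `N = M^⊥` is primitive, every functional on `N` extends to
`L`, so restriction maps `L^♯` onto `N^♯ / A`. Finally `ℓ(N^♯) ≤ ℓ(A) + ℓ(N^♯ / A)`. -/

section glength

variable {A B : Type*} [AddCommGroup A] [AddCommGroup B]

lemma glength_le_card {s : Finset A} (hs : Submodule.span ℤ (s : Set A) = ⊤) :
    glength A ≤ s.card :=
  Nat.sInf_le ⟨s, rfl, hs⟩

lemma exists_finset_card_eq_glength [Module.Finite ℤ A] :
    ∃ s : Finset A, s.card = glength A ∧ Submodule.span ℤ (s : Set A) = ⊤ := by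
  obtain ⟨s, hs⟩ := Module.Finite.fg_top (R := ℤ) (M := A)
  exact Nat.sInf_mem (s := {n | ∃ s : Finset A, s.card = n ∧ _}) ⟨s.card, s, rfl, hs⟩

lemma glength_le_finrank [Module.Free ℤ A] [Module.Finite ℤ A] :
    glength A ≤ Module.finrank ℤ A := by
  classical
  let b := Module.finBasis ℤ A
  calc glength A ≤ (Finset.univ.image b).card :=
        glength_le_card (by rw [Finset.coe_image, Finset.coe_univ, Set.image_univ, b.span_eq])
    _ ≤ Module.finrank ℤ A := Finset.card_image_le.trans (by simp)

lemma glength_le_of_surjective [Module.Finite ℤ A] (f : A →ₗ[ℤ] B)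
    (hf : Function.Surjective f) : glength B ≤ glength A := by
  classical
  obtain ⟨s, hcard, hspan⟩ := exists_finset_card_eq_glength (A := A)
  calc glength B ≤ (s.image f).card := glength_le_card <| by
        rw [Finset.coe_image, ← Submodule.map_span, hspan, Submodule.map_top,
          LinearMap.range_eq_top.mpr hf]
    _ ≤ glength A := hcard ▸ Finset.card_image_le

/-- A submodule of `ℤ^n` is free of rank at most `n`: pull `B` back along a surjection
`ℤ^n → A` with `n = glength A`. -/
lemma glength_le_of_injective [Module.Finite ℤ A] (f : B →ₗ[ℤ] A)
    (hf : Function.Injective f) : glength B ≤ glength A := by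
  obtain ⟨s, hcard, hspan⟩ := exists_finset_card_eq_glength (A := A)
  let g : (s → ℤ) →ₗ[ℤ] A := Fintype.linearCombination ℤ (↑)
  have hg : Function.Surjective g := by
    rw [← LinearMap.range_eq_top, Fintype.range_linearCombination, Subtype.range_coe, hspan]
  let Q := (LinearMap.range f).comap g
  let e : B ≃ₗ[ℤ] LinearMap.range f := LinearEquiv.ofInjective f hf
  let h : Q →ₗ[ℤ] B := e.symm.toLinearMap ∘ₗ g.restrict (fun _ hx => hx)
  have hh : Function.Surjective h := by
    intro b
    obtain ⟨x, hx⟩ := hg (f b)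
    refine ⟨⟨x, by simp [Q, hx]⟩, e.injective ?_⟩
    ext
    simp [h, e, hx]
  calc glength B ≤ glength Q := glength_le_of_surjective h hh
    _ ≤ Module.finrank ℤ Q := glength_le_finrank
    _ ≤ Module.finrank ℤ (s → ℤ) := Q.finrank_le
    _ = glength A := by simp [hcard]

lemma glength_range_le_of_ker_eq {C : Type*} [AddCommGroup C] [Module.Finite ℤ C]
    (f : A →ₗ[ℤ] B) (g : A →ₗ[ℤ] C) (h : LinearMap.ker f = LinearMap.ker g) :
    glength (LinearMap.range f) ≤ glength C := by
  let e : LinearMap.range f ≃ₗ[ℤ] LinearMap.range g :=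
    f.quotKerEquivRange.symm ≪≫ₗ Submodule.quotEquivOfEq _ _ h ≪≫ₗ g.quotKerEquivRange
  exact glength_le_of_injective ((LinearMap.range g).subtype ∘ₗ e.toLinearMap)
    (Subtype.val_injective.comp e.injective)

lemma glength_le_glength_add_glength_quotient [Module.Finite ℤ B] (P : Submodule ℤ B) :
    glength B ≤ glength P + glength (B ⧸ P) := by
  classical
  have := isNoetherian_of_isNoetherianRing_of_finite ℤ B
  obtain ⟨s, hs, hspan_s⟩ := exists_finset_card_eq_glength (A := P)
  obtain ⟨t, ht, hspan_t⟩ := exists_finset_card_eq_glength (A := B ⧸ P)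
  let u := s.image P.subtype ∪ t.image Quotient.out
  have hP : P ≤ Submodule.span ℤ u := by
    rw [← P.range_subtype, LinearMap.range_eq_map, ← hspan_s, Submodule.map_span]
    exact Submodule.span_mono (by simp [u])
  have hquot : (Submodule.span ℤ (u : Set B)).map P.mkQ = ⊤ := by
    rw [eq_top_iff, ← hspan_t, Submodule.map_span, Submodule.span_le]
    intro y hy
    exact Submodule.subset_span
      ⟨y.out, Finset.mem_union_right _ (Finset.mem_image_of_mem _ hy), by simp⟩
  have hu : Submodule.span ℤ (u : Set B) = ⊤ := by
    rw [← sup_eq_right.mpr hP, ← Submodule.comap_map_mkQ, hquot, Submodule.comap_top]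
  calc glength B ≤ u.card := glength_le_card hu
    _ ≤ s.card + t.card :=
        (Finset.card_union_le _ _).trans (add_le_add Finset.card_image_le Finset.card_image_le)
    _ = glength P + glength (B ⧸ P) := by rw [hs, ht]

end glength

def Submodule.IsPrimitive {L : Type*} [AddCommGroup L] (N : Submodule ℤ L) : Prop :=
  ∀ (c : ℤ) (x : L), c ≠ 0 → c • x ∈ N → x ∈ N

/-- `L ⧸ N` is torsion-free, hence free and projective, so `N` has a linear retraction. -/
lemma Submodule.IsPrimitive.exists_extension {L : Type*} [AddCommGroup L] [Module.Finite ℤ L]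
    {N : Submodule ℤ L} (hN : N.IsPrimitive) (g : N →ₗ[ℤ] ℤ) :
    ∃ G : L →ₗ[ℤ] ℤ, G ∘ₗ N.subtype = g := by
  have : Module.IsTorsionFree ℤ (L ⧸ N) := by
    refine Module.isTorsionFree_iff_smul_eq_zero.mpr fun {c x} hcx => ?_
    obtain ⟨y, rfl⟩ := N.mkQ_surjective x
    by_contra! h
    rw [← map_smul, Submodule.mkQ_apply, Submodule.Quotient.mk_eq_zero] at hcx
    exact h.2 ((Submodule.Quotient.mk_eq_zero N).mpr (hN c y h.1 hcx))
  obtain ⟨σ, hσ⟩ := N.mkQ.exists_rightInverse_of_surjective N.range_mkQ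
  have hπ (x : L) : x - σ (N.mkQ x) ∈ N := by
    rw [← Submodule.Quotient.mk_eq_zero, ← Submodule.mkQ_apply, map_sub,
      ← LinearMap.comp_apply N.mkQ σ, hσ, LinearMap.id_apply, sub_self]
  refine ⟨g ∘ₗ (LinearMap.id - σ ∘ₗ N.mkQ).codRestrict N hπ,
    LinearMap.ext fun n => congrArg g (Subtype.ext ?_)⟩
  simp [(Submodule.Quotient.mk_eq_zero N).mpr n.2]

section Lattice

variable {S : Matrix (Fin m) (Fin m) ℤ}

lemma BM_comm (hS : S.IsSymm) (v w : Fin m → ℤ) : BM S v w = BM S w v := by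
  rw [BM, BM, dotProduct_mulVec, ← mulVec_transpose, hS.eq, dotProduct_comm]

lemma BM_add_left (u v w : Fin m → ℤ) : BM S (u + v) w = BM S u w + BM S v w :=
  LinearMap.map_add₂ (bilinMap S) u v w

lemma BM_sub_left (u v w : Fin m → ℤ) : BM S (u - v) w = BM S u w - BM S v w :=
  LinearMap.map_sub₂ (bilinMap S) u v w

lemma BM_smul_left (c : ℤ) (v w : Fin m → ℤ) : BM S (c • v) w = c * BM S v w :=
  LinearMap.map_smul₂ (bilinMap S) c v w

lemma isPrimitive_orthoM (M : Submodule ℤ (Fin m → ℤ)) : (orthoM S M).IsPrimitive :=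
  fun c x hc hcx w hw => (mul_eq_zero.mp (BM_smul_left c x w ▸ hcx w hw)).resolve_left hc

variable (S) in
def toDiscGroup (M : Submodule ℤ (Fin m → ℤ)) : (Fin m → ℤ) →ₗ[ℤ] discGroup S M :=
  (LinearMap.range ((bilinMap S).domRestrict₁₂ M M)).mkQ ∘ₗ (bilinMap S).domRestrict₂ M

lemma ker_toDiscGroup (M : Submodule ℤ (Fin m → ℤ)) :
    LinearMap.ker (toDiscGroup S M) = M ⊔ orthoM S M := by
  ext x
  simp only [toDiscGroup, LinearMap.mem_ker, LinearMap.comp_apply, Submodule.mkQ_apply,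
    Submodule.Quotient.mk_eq_zero, LinearMap.mem_range, Submodule.mem_sup]
  constructor
  · rintro ⟨y, hy⟩
    refine ⟨y, y.2, x - y, fun w hw => ?_, add_sub_cancel _ _⟩
    rw [BM_sub_left, sub_eq_zero]
    exact (LinearMap.congr_fun hy ⟨w, hw⟩).symm
  · rintro ⟨y, hy, n, hn, rfl⟩
    refine ⟨⟨y, hy⟩, LinearMap.ext fun w => ?_⟩
    show BM S y w = BM S (y + n) w
    rw [BM_add_left, hn w w.2, add_zero]

lemma glength_discGroup_quotient_range_le {N : Submodule ℤ (Fin m → ℤ)} (hN : N.IsPrimitive) :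
    glength (discGroup S N ⧸ LinearMap.range (toDiscGroup S N)) ≤
      glength (discGroup S ⊤) := by
  let res := (Submodule.inclusion (le_top : N ≤ ⊤)).dualMap
  have hres : Function.Surjective res := fun g => by
    obtain ⟨G, hG⟩ := hN.exists_extension g
    exact ⟨G ∘ₗ Submodule.subtype ⊤, hG⟩
  let χ := (LinearMap.range (toDiscGroup S N)).mkQ ∘ₗ
    (LinearMap.range ((bilinMap S).domRestrict₁₂ N N)).mkQ ∘ₗ res
  have hχ : LinearMap.range ((bilinMap S).domRestrict₁₂ ⊤ ⊤) ≤ LinearMap.ker χ := by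
    rintro _ ⟨y, rfl⟩
    exact (Submodule.Quotient.mk_eq_zero _).mpr ⟨y, rfl⟩
  refine glength_le_of_surjective (Submodule.liftQ _ χ hχ) ?_
  rw [← LinearMap.range_eq_top, Submodule.range_liftQ, LinearMap.range_eq_top]
  exact (Submodule.mkQ_surjective _).comp ((Submodule.mkQ_surjective _).comp hres)

def castVec : (Fin m → ℤ) →ₗ[ℤ] (Fin m → ℚ) :=
  (Algebra.linearMap ℤ ℚ).compLeft (Fin m)

@[simp]
lemma castVec_apply (x : Fin m → ℤ) (i : Fin m) : castVec x i = x i := rfl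

lemma castVec_injective : Function.Injective (castVec (m := m)) :=
  fun _ _ h => funext fun i => Int.cast_injective (α := ℚ) (congrFun h i)

lemma toBilin'_map_intCast_castVec (x y : Fin m → ℤ) :
    (S.map (Int.cast : ℤ → ℚ)).toBilin' (castVec x) (castVec y) = BM S x y := by
  simp [Matrix.toBilin'_apply', BM, dotProduct, mulVec]

lemma exists_smul_eq_castVec (u : Fin m → ℚ) :
    ∃ d : ℤ, d ≠ 0 ∧ ∃ x, (d : ℚ) • u = castVec x := by
  obtain ⟨b, hb⟩ := IsLocalization.exist_integer_multiples_of_finite (nonZeroDivisors ℤ) u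
  choose x hx using hb
  exact ⟨b, nonZeroDivisors.coe_ne_zero b, x, funext fun i => by simpa using (hx i).symm⟩

lemma exists_smul_eq_castVec_of_mem_span {P : Submodule ℤ (Fin m → ℤ)} {u : Fin m → ℚ}
    (hu : u ∈ Submodule.span ℚ (castVec '' P)) :
    ∃ d : ℤ, d ≠ 0 ∧ ∃ w ∈ P, (d : ℚ) • u = castVec w := by
  induction hu using Submodule.span_induction with
  | mem _ hx =>
    obtain ⟨w, hw, rfl⟩ := hx
    exact ⟨1, one_ne_zero, w, hw, by simp⟩
  | zero => exact ⟨1, one_ne_zero, 0, P.zero_mem, by simp⟩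
  | add x y _ _ hx hy =>
    obtain ⟨a, ha, v, hv, hav⟩ := hx
    obtain ⟨b, hb, w, hw, hbw⟩ := hy
    refine ⟨a * b, mul_ne_zero ha hb, b • v + a • w,
      P.add_mem (P.smul_mem b hv) (P.smul_mem a hw), ?_⟩
    rw [map_add, map_zsmul, map_zsmul, ← hav, ← hbw, ← Int.cast_smul_eq_zsmul ℚ,
      ← Int.cast_smul_eq_zsmul ℚ]
    push_cast
    module
  | smul q x _ hx =>
    obtain ⟨a, ha, w, hw, haw⟩ := hx
    refine ⟨a * q.den, mul_ne_zero ha (by exact_mod_cast q.den_ne_zero), q.num • w,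
      P.smul_mem _ hw, ?_⟩
    rw [map_zsmul, ← haw, ← Int.cast_smul_eq_zsmul ℚ, smul_smul, smul_smul]
    congr 1
    push_cast
    linear_combination (a : ℚ) * Rat.mul_den_eq_num q

lemma orthoM_orthoM (hS : S.IsSymm) (hdet : S.det ≠ 0) {M : Submodule ℤ (Fin m → ℤ)}
    (hM : M.IsPrimitive) : orthoM S (orthoM S M) = M := by
  refine le_antisymm (fun v hv => ?_) (fun v hv w hw => BM_comm hS v w ▸ hw v hv)
  set B := (S.map (Int.cast : ℤ → ℚ)).toBilin'
  have hB : B.IsSymm := Matrix.isSymm_toBilin'_iff_isSymm.mpr (hS.map _)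
  have hBnd : B.Nondegenerate := by
    refine LinearMap.BilinForm.nondegenerate_toBilin'_of_det_ne_zero' _ ?_
    rwa [← Int.cast_det, Int.cast_ne_zero]
  -- over `ℚ`, `(span M)^⊥⊥ = span M`; clearing denominators brings `v` back into `M`
  have hv' : castVec v ∈ B.orthogonal (B.orthogonal (Submodule.span ℚ (castVec '' M))) := by
    refine LinearMap.BilinForm.mem_orthogonal_iff.mpr fun u hu => ?_
    obtain ⟨d, hd, x, hdx⟩ := exists_smul_eq_castVec u
    have hx : x ∈ orthoM S M := fun w hw => by
      have huw : B u (castVec w) = 0 :=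
        (hB.eq _ _).trans (hu _ (Submodule.subset_span ⟨w, hw, rfl⟩))
      have : (BM S x w : ℚ) = d * B u (castVec w) := by
        rw [← toBilin'_map_intCast_castVec, ← hdx, map_smul, LinearMap.smul_apply, smul_eq_mul]
      exact_mod_cast (this.trans (by rw [huw, mul_zero]) : (BM S x w : ℚ) = 0)
    have : (d : ℚ) * B u (castVec v) = 0 := by
      rw [← smul_eq_mul, ← LinearMap.smul_apply, ← map_smul, hdx,
        toBilin'_map_intCast_castVec,
        BM_comm hS, hv x hx, Int.cast_zero]
    exact (mul_eq_zero.mp this).resolve_left (by exact_mod_cast hd)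
  rw [LinearMap.BilinForm.orthogonal_orthogonal hBnd hB.isRefl] at hv'
  obtain ⟨d, hd, w, hw, hdw⟩ := exists_smul_eq_castVec_of_mem_span hv'
  have hdv : d • v = w :=
    castVec_injective (by rw [map_zsmul, ← Int.cast_smul_eq_zsmul ℚ, hdw])
  exact hM d v hd (hdv ▸ hw)

end Lattice

theorem stmt6_general {m : ℕ} (S : Matrix (Fin m) (Fin m) ℤ) (hsymm : S.IsSymm)
    (hnondeg : S.det ≠ 0)
    (M : Submodule ℤ (Fin m → ℤ))
    (hprim : ∀ (c : ℤ) (x : Fin m → ℤ), c ≠ 0 → c • x ∈ M → x ∈ M) :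
    glength (discGroup S (orthoM S M)) ≤
      glength (discGroup S M) + glength (discGroup S (⊤ : Submodule ℤ (Fin m → ℤ))) := by
  set N := orthoM S M
  have hker : LinearMap.ker (toDiscGroup S N) = LinearMap.ker (toDiscGroup S M) := by
    rw [ker_toDiscGroup, ker_toDiscGroup, orthoM_orthoM hsymm hnondeg hprim, sup_comm]
  calc glength (discGroup S N)
      ≤ glength (LinearMap.range (toDiscGroup S N)) +
          glength (discGroup S N ⧸ LinearMap.range (toDiscGroup S N)) :=
        glength_le_glength_add_glength_quotient _
    _ ≤ glength (discGroup S M) + glength (discGroup S ⊤) :=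
        add_le_add (glength_range_le_of_ker_eq _ _ hker)
          (glength_discGroup_quotient_range_le (isPrimitive_orthoM M))

/-- Let `L` be an even lattice, `M ⊆ L` a primitive sublattice on which the bilinear form
is non-degenerate, and `N = M^⊥`. Then `ℓ(N^♯) ≤ ℓ(M^♯) + ℓ(L^♯)`. -/
theorem stmt6 {m : ℕ} (S : Matrix (Fin m) (Fin m) ℤ) (hsymm : S.IsSymm)
    (hnondeg : S.det ≠ 0)
    (heven : ∀ v : Fin m → ℤ, Even (BM S v v))
    (M : Submodule ℤ (Fin m → ℤ))
    (hprim : ∀ (c : ℤ) (x : Fin m → ℤ), c ≠ 0 → c • x ∈ M → x ∈ M)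
    (hMnondeg : ∀ v ∈ M, (∀ w ∈ M, BM S v w = 0) → v = 0) :
    glength (discGroup S (orthoM S M)) ≤
      glength (discGroup S M) + glength (discGroup S (⊤ : Submodule ℤ (Fin m → ℤ))) :=
  stmt6_general S hsymm hnondeg M hprim
end

section
/- Let g be an isometry of order 2 of the lattice 𝐋 = 3U ⊕ 2E8 ⊕ A2 whose coinvariant sublattice 𝐋_g has rank 1 and is generated by a vector v with v·v = -6. Then v·w ∈ 3ℤ for every w ∈ 𝐋, and the divisibility of v satisfies (v,𝐋) = 3. -/
open Matrix

/-!
Since `g` is an isometry, `g` preserves `𝐋_g = ℤ v`, so `g v = c v` with `c² (v·v) = v·v`,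
hence `c = ±1`; `c = 1` would put `v` in `𝐋^g ∩ 𝐋_g`, forcing `v·v = 0`, so `g v = -v`.
For every `w`, the vector `w - g w` lies in `𝐋_g`, say `w - g w = k v`, and pairing with `v`
gives `2 (v·w) = k (v·v) = -6k`, so `3 ∣ v·w`.
Conversely `(v,𝐋)` divides `v·v = -6`, and it is odd: the Gram matrix of `𝐋` is invertible
modulo `2` (its determinant is `±3`), so if all `v·w` were even then `v ∈ 2𝐋` and `4 ∣ v·v`.
-/

/-- Gram matrix of the lattice `𝐋 = 3U ⊕ 2E8 ⊕ A2` (with `E8` negative definite):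
three hyperbolic blocks, two copies of the negative definite `E8` Gram matrix,
and the `A2` block `!![-2,1;1,-2]`. -/
def LGram : Matrix (Fin 24) (Fin 24) ℤ :=
  !![0, 1, 0, 0, 0, 0, 0, 0, 0, 0, 0, 0, 0, 0, 0, 0, 0, 0, 0, 0, 0, 0, 0, 0;
    1, 0, 0, 0, 0, 0, 0, 0, 0, 0, 0, 0, 0, 0, 0, 0, 0, 0, 0, 0, 0, 0, 0, 0;
    0, 0, 0, 1, 0, 0, 0, 0, 0, 0, 0, 0, 0, 0, 0, 0, 0, 0, 0, 0, 0, 0, 0, 0;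
    0, 0, 1, 0, 0, 0, 0, 0, 0, 0, 0, 0, 0, 0, 0, 0, 0, 0, 0, 0, 0, 0, 0, 0;
    0, 0, 0, 0, 0, 1, 0, 0, 0, 0, 0, 0, 0, 0, 0, 0, 0, 0, 0, 0, 0, 0, 0, 0;
    0, 0, 0, 0, 1, 0, 0, 0, 0, 0, 0, 0, 0, 0, 0, 0, 0, 0, 0, 0, 0, 0, 0, 0;
    0, 0, 0, 0, 0, 0, -2, 0, 1, 0, 0, 0, 0, 0, 0, 0, 0, 0, 0, 0, 0, 0, 0, 0;
    0, 0, 0, 0, 0, 0, 0, -2, 0, 1, 0, 0, 0, 0, 0, 0, 0, 0, 0, 0, 0, 0, 0, 0;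
    0, 0, 0, 0, 0, 0, 1, 0, -2, 1, 0, 0, 0, 0, 0, 0, 0, 0, 0, 0, 0, 0, 0, 0;
    0, 0, 0, 0, 0, 0, 0, 1, 1, -2, 1, 0, 0, 0, 0, 0, 0, 0, 0, 0, 0, 0, 0, 0;
    0, 0, 0, 0, 0, 0, 0, 0, 0, 1, -2, 1, 0, 0, 0, 0, 0, 0, 0, 0, 0, 0, 0, 0;
    0, 0, 0, 0, 0, 0, 0, 0, 0, 0, 1, -2, 1, 0, 0, 0, 0, 0, 0, 0, 0, 0, 0, 0;
    0, 0, 0, 0, 0, 0, 0, 0, 0, 0, 0, 1, -2, 1, 0, 0, 0, 0, 0, 0, 0, 0, 0, 0;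
    0, 0, 0, 0, 0, 0, 0, 0, 0, 0, 0, 0, 1, -2, 0, 0, 0, 0, 0, 0, 0, 0, 0, 0;
    0, 0, 0, 0, 0, 0, 0, 0, 0, 0, 0, 0, 0, 0, -2, 0, 1, 0, 0, 0, 0, 0, 0, 0;
    0, 0, 0, 0, 0, 0, 0, 0, 0, 0, 0, 0, 0, 0, 0, -2, 0, 1, 0, 0, 0, 0, 0, 0;
    0, 0, 0, 0, 0, 0, 0, 0, 0, 0, 0, 0, 0, 0, 1, 0, -2, 1, 0, 0, 0, 0, 0, 0;
    0, 0, 0, 0, 0, 0, 0, 0, 0, 0, 0, 0, 0, 0, 0, 1, 1, -2, 1, 0, 0, 0, 0, 0;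
    0, 0, 0, 0, 0, 0, 0, 0, 0, 0, 0, 0, 0, 0, 0, 0, 0, 1, -2, 1, 0, 0, 0, 0;
    0, 0, 0, 0, 0, 0, 0, 0, 0, 0, 0, 0, 0, 0, 0, 0, 0, 0, 1, -2, 1, 0, 0, 0;
    0, 0, 0, 0, 0, 0, 0, 0, 0, 0, 0, 0, 0, 0, 0, 0, 0, 0, 0, 1, -2, 1, 0, 0;
    0, 0, 0, 0, 0, 0, 0, 0, 0, 0, 0, 0, 0, 0, 0, 0, 0, 0, 0, 0, 1, -2, 0, 0;
    0, 0, 0, 0, 0, 0, 0, 0, 0, 0, 0, 0, 0, 0, 0, 0, 0, 0, 0, 0, 0, 0, -2, 1;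
    0, 0, 0, 0, 0, 0, 0, 0, 0, 0, 0, 0, 0, 0, 0, 0, 0, 0, 0, 0, 0, 0, 1, -2]

/-- The bilinear form of the lattice `𝐋`. -/
def Bf (v w : Fin 24 → ℤ) : ℤ := v ⬝ᵥ (LGram *ᵥ w)

/-- An isometry of `𝐋` is a `ℤ`-linear automorphism preserving the bilinear form. -/
def IsIsometry (g : (Fin 24 → ℤ) ≃ₗ[ℤ] (Fin 24 → ℤ)) : Prop :=
  ∀ v w, Bf (g v) (g w) = Bf v w

/-- The invariant sublattice `𝐋^g = {v ∈ 𝐋 : g v = v}`. -/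
def invL (g : (Fin 24 → ℤ) ≃ₗ[ℤ] (Fin 24 → ℤ)) : Submodule ℤ (Fin 24 → ℤ) where
  carrier := {v | g v = v}
  add_mem' := by intro a b ha hb; simp only [Set.mem_setOf_eq, map_add] at *; rw [ha, hb]
  zero_mem' := by simp
  smul_mem' := by intro c a ha; simp only [Set.mem_setOf_eq, _root_.map_smul] at *; rw [ha]

/-- The coinvariant sublattice `𝐋_g = {v ∈ 𝐋 : v·w = 0 for all w ∈ 𝐋^g}`. -/
def coinvL (g : (Fin 24 → ℤ) ≃ₗ[ℤ] (Fin 24 → ℤ)) : Submodule ℤ (Fin 24 → ℤ) where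
  carrier := {v | ∀ w ∈ invL g, Bf v w = 0}
  add_mem' := by
    intro a b ha hb w hw
    simp only [Bf, add_dotProduct] at *
    rw [ha w hw, hb w hw, add_zero]
  zero_mem' := by intro w hw; simp [Bf]
  smul_mem' := by
    intro c a ha w hw
    simp only [Bf, smul_dotProduct] at *
    rw [ha w hw, smul_zero]

/-- The divisibility of `v` in `𝐋` is `d`, i.e. `gcd {v·w : w ∈ 𝐋} = d`. -/
def HasDivisibility (v : Fin 24 → ℤ) (d : ℤ) : Prop :=
  (∀ w, d ∣ Bf v w) ∧ ∀ e : ℤ, (∀ w, e ∣ Bf v w) → e ∣ d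

theorem Matrix.dvd_of_forall_dvd_mulVec {n : Type*} [Fintype n] [DecidableEq n] {p : ℕ}
    {G : Matrix n n ℤ} {B : Matrix n n (ZMod p)} (hB : B * G.map (Int.cast : ℤ → ZMod p) = 1)
    {v : n → ℤ} (hv : ∀ i, (p : ℤ) ∣ (G *ᵥ v) i) (j : n) : (p : ℤ) ∣ v j := by
  have hker : G.map (Int.cast : ℤ → ZMod p) *ᵥ ((Int.castRingHom (ZMod p)) ∘ v) = 0 := by
    funext i
    have h := (Int.castRingHom (ZMod p)).map_mulVec G v i
    rw [eq_intCast, (ZMod.intCast_zmod_eq_zero_iff_dvd _ p).mpr (hv i)] at h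
    exact h.symm
  have hv0 : (Int.castRingHom (ZMod p)) ∘ v = 0 := by
    rw [← Matrix.one_mulVec ((Int.castRingHom (ZMod p)) ∘ v), ← hB, ← Matrix.mulVec_mulVec, hker,
      Matrix.mulVec_zero]
  exact (ZMod.intCast_zmod_eq_zero_iff_dvd _ p).mp (congrFun hv0 j)

lemma LGram_isSymm : LGram.IsSymm := by
  apply Matrix.IsSymm.ext
  -- phrased through `Matrix.of.symm`, for which `decide` finds a `Decidable` instance
  have h : ∀ i j : Fin 24, Matrix.of.symm LGram j i = Matrix.of.symm LGram i j := by decide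
  exact h

def LGramInvModTwo : Matrix (Fin 24) (Fin 24) (ZMod 2) :=
  !![0, 1, 0, 0, 0, 0, 0, 0, 0, 0, 0, 0, 0, 0, 0, 0, 0, 0, 0, 0, 0, 0, 0, 0;
    1, 0, 0, 0, 0, 0, 0, 0, 0, 0, 0, 0, 0, 0, 0, 0, 0, 0, 0, 0, 0, 0, 0, 0;
    0, 0, 0, 1, 0, 0, 0, 0, 0, 0, 0, 0, 0, 0, 0, 0, 0, 0, 0, 0, 0, 0, 0, 0;
    0, 0, 1, 0, 0, 0, 0, 0, 0, 0, 0, 0, 0, 0, 0, 0, 0, 0, 0, 0, 0, 0, 0, 0;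
    0, 0, 0, 0, 0, 1, 0, 0, 0, 0, 0, 0, 0, 0, 0, 0, 0, 0, 0, 0, 0, 0, 0, 0;
    0, 0, 0, 0, 1, 0, 0, 0, 0, 0, 0, 0, 0, 0, 0, 0, 0, 0, 0, 0, 0, 0, 0, 0;
    0, 0, 0, 0, 0, 0, 0, 1, 1, 0, 0, 0, 0, 0, 0, 0, 0, 0, 0, 0, 0, 0, 0, 0;
    0, 0, 0, 0, 0, 0, 1, 0, 0, 1, 0, 1, 0, 1, 0, 0, 0, 0, 0, 0, 0, 0, 0, 0;
    0, 0, 0, 0, 0, 0, 1, 0, 0, 0, 0, 0, 0, 0, 0, 0, 0, 0, 0, 0, 0, 0, 0, 0;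
    0, 0, 0, 0, 0, 0, 0, 1, 0, 0, 0, 0, 0, 0, 0, 0, 0, 0, 0, 0, 0, 0, 0, 0;
    0, 0, 0, 0, 0, 0, 0, 0, 0, 0, 0, 1, 0, 1, 0, 0, 0, 0, 0, 0, 0, 0, 0, 0;
    0, 0, 0, 0, 0, 0, 0, 1, 0, 0, 1, 0, 0, 0, 0, 0, 0, 0, 0, 0, 0, 0, 0, 0;
    0, 0, 0, 0, 0, 0, 0, 0, 0, 0, 0, 0, 0, 1, 0, 0, 0, 0, 0, 0, 0, 0, 0, 0;
    0, 0, 0, 0, 0, 0, 0, 1, 0, 0, 1, 0, 1, 0, 0, 0, 0, 0, 0, 0, 0, 0, 0, 0;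
    0, 0, 0, 0, 0, 0, 0, 0, 0, 0, 0, 0, 0, 0, 0, 1, 1, 0, 0, 0, 0, 0, 0, 0;
    0, 0, 0, 0, 0, 0, 0, 0, 0, 0, 0, 0, 0, 0, 1, 0, 0, 1, 0, 1, 0, 1, 0, 0;
    0, 0, 0, 0, 0, 0, 0, 0, 0, 0, 0, 0, 0, 0, 1, 0, 0, 0, 0, 0, 0, 0, 0, 0;
    0, 0, 0, 0, 0, 0, 0, 0, 0, 0, 0, 0, 0, 0, 0, 1, 0, 0, 0, 0, 0, 0, 0, 0;
    0, 0, 0, 0, 0, 0, 0, 0, 0, 0, 0, 0, 0, 0, 0, 0, 0, 0, 0, 1, 0, 1, 0, 0;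
    0, 0, 0, 0, 0, 0, 0, 0, 0, 0, 0, 0, 0, 0, 0, 1, 0, 0, 1, 0, 0, 0, 0, 0;
    0, 0, 0, 0, 0, 0, 0, 0, 0, 0, 0, 0, 0, 0, 0, 0, 0, 0, 0, 0, 0, 1, 0, 0;
    0, 0, 0, 0, 0, 0, 0, 0, 0, 0, 0, 0, 0, 0, 0, 1, 0, 0, 1, 0, 1, 0, 0, 0;
    0, 0, 0, 0, 0, 0, 0, 0, 0, 0, 0, 0, 0, 0, 0, 0, 0, 0, 0, 0, 0, 0, 0, 1;
    0, 0, 0, 0, 0, 0, 0, 0, 0, 0, 0, 0, 0, 0, 0, 0, 0, 0, 0, 0, 0, 0, 1, 0]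

set_option maxHeartbeats 4000000 in
set_option maxRecDepth 10000 in
lemma LGramInvModTwo_mul_LGram : LGramInvModTwo * LGram.map (Int.cast : ℤ → ZMod 2) = 1 := by
  decide

lemma Bf_comm (v w : Fin 24 → ℤ) : Bf v w = Bf w v := by
  rw [Bf, Bf, Matrix.dotProduct_mulVec, ← Matrix.mulVec_transpose, LGram_isSymm.eq,
    dotProduct_comm]

lemma Bf_single_left (i : Fin 24) (v : Fin 24 → ℤ) : Bf (Pi.single i 1) v = (LGram *ᵥ v) i := by
  rw [Bf, single_dotProduct, one_mul]

section Bf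

variable {u v w : Fin 24 → ℤ}

lemma Bf_neg_left : Bf (-u) v = -Bf u v := by
  simp [Bf]

lemma Bf_sub_left : Bf (u - v) w = Bf u w - Bf v w := by
  simp [Bf, sub_dotProduct]

lemma Bf_sub_right : Bf u (v - w) = Bf u v - Bf u w := by
  simp [Bf, Matrix.mulVec_sub, dotProduct_sub]

lemma Bf_smul_left (c : ℤ) : Bf (c • u) v = c * Bf u v := by
  rw [Bf, smul_dotProduct, smul_eq_mul, Bf]

lemma Bf_smul_right (c : ℤ) : Bf u (c • v) = c * Bf u v := by
  rw [Bf, Matrix.mulVec_smul, dotProduct_smul, smul_eq_mul, Bf]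

lemma two_dvd_of_forall_two_dvd_Bf (h : ∀ w, 2 ∣ Bf v w) (j : Fin 24) : 2 ∣ v j :=
  Matrix.dvd_of_forall_dvd_mulVec (p := 2) LGramInvModTwo_mul_LGram
    (fun i => by simpa [Bf_single_left, Bf_comm v] using h (Pi.single i 1)) j

lemma exists_not_two_dvd_Bf (hv : ¬ 4 ∣ Bf v v) : ∃ w, ¬ 2 ∣ Bf v w := by
  by_contra! h
  choose u hu using two_dvd_of_forall_two_dvd_Bf h
  have hvu : v = (2 : ℤ) • u := funext hu
  apply hv
  rw [hvu, Bf_smul_left, Bf_smul_right, ← mul_assoc]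
  exact dvd_mul_right 4 _

end Bf

section Isometry

variable {g : (Fin 24 → ℤ) ≃ₗ[ℤ] (Fin 24 → ℤ)} {v : Fin 24 → ℤ}

lemma IsIsometry.apply_mem_coinvL (hiso : IsIsometry g) {x : Fin 24 → ℤ} (hx : x ∈ coinvL g) :
    g x ∈ coinvL g := fun t (ht : g t = t) => by
  rw [← ht, hiso]
  exact hx t ht

lemma IsIsometry.sub_apply_mem_coinvL (hiso : IsIsometry g) (w : Fin 24 → ℤ) :
    w - g w ∈ coinvL g := fun t (ht : g t = t) => by
  rw [Bf_sub_left, ← hiso w t, ht, sub_self]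

lemma IsIsometry.apply_eq_neg_of_coinvL_eq_span (hiso : IsIsometry g)
    (hgen : coinvL g = Submodule.span ℤ {v}) (hv : Bf v v ≠ 0) : g v = -v := by
  have hvmem : v ∈ coinvL g := hgen ▸ Submodule.mem_span_singleton_self v
  obtain ⟨c, hc⟩ := Submodule.mem_span_singleton.mp (hgen ▸ hiso.apply_mem_coinvL hvmem)
  have hcc : c * c = 1 := by
    have h := hiso v v
    rw [← hc, Bf_smul_left, Bf_smul_right, ← mul_assoc] at h
    exact (mul_eq_right₀ hv).mp h
  rcases mul_self_eq_one_iff.mp hcc with rfl | rfl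
  · rw [one_smul] at hc
    exact absurd (hvmem v hc.symm) hv
  · rw [← hc, neg_one_smul]

lemma IsIsometry.Bf_self_dvd_two_mul_Bf (hiso : IsIsometry g)
    (hgen : coinvL g = Submodule.span ℤ {v}) (hv : Bf v v ≠ 0) (w : Fin 24 → ℤ) :
    Bf v v ∣ 2 * Bf v w := by
  obtain ⟨c, hc⟩ := Submodule.mem_span_singleton.mp (hgen ▸ hiso.sub_apply_mem_coinvL w)
  have hpair : Bf v (g w) = -Bf v w := by
    rw [← hiso v w, hiso.apply_eq_neg_of_coinvL_eq_span hgen hv, Bf_neg_left, neg_neg]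
  refine ⟨c, ?_⟩
  rw [two_mul, ← sub_neg_eq_add, ← hpair, ← Bf_sub_right, ← hc, Bf_smul_right, mul_comm]

end Isometry

theorem stmt7_general (g : (Fin 24 → ℤ) ≃ₗ[ℤ] (Fin 24 → ℤ)) (hiso : IsIsometry g)
    (v : Fin 24 → ℤ)
    (hgen : coinvL g = Submodule.span ℤ {v})
    (hv6 : Bf v v = -6) :
    (∀ w : Fin 24 → ℤ, (3 : ℤ) ∣ Bf v w) ∧ HasDivisibility v 3 := by
  have hv0 : Bf v v ≠ 0 := by rw [hv6]; decide
  have h3 : ∀ w, (3 : ℤ) ∣ Bf v w := fun w => by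
    have h := hiso.Bf_self_dvd_two_mul_Bf hgen hv0 w
    rw [hv6, neg_dvd] at h
    omega
  refine ⟨h3, h3, fun e he => ?_⟩
  have he6 : e ∣ 2 * 3 := by simpa [hv6] using he v
  obtain ⟨w, hw⟩ := exists_not_two_dvd_Bf (v := v) (by rw [hv6]; decide)
  have hodd : IsCoprime 2 e :=
    (Int.prime_two.coprime_iff_not_dvd).mpr fun h2 => hw (h2.trans (he w))
  exact hodd.symm.dvd_of_dvd_mul_left he6

/-- If `g` is an isometry of order `2` of `𝐋 = 3U ⊕ 2E8 ⊕ A2` whose coinvariant sublattice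
has rank `1` and is generated by a vector `v` with `v·v = -6`, then `v·w ∈ 3ℤ` for every
`w ∈ 𝐋`, and the divisibility of `v` is `(v,𝐋) = 3`. -/
theorem stmt7 (g : (Fin 24 → ℤ) ≃ₗ[ℤ] (Fin 24 → ℤ)) (hiso : IsIsometry g)
    (hord : orderOf g = 2) (v : Fin 24 → ℤ)
    (hrank : Module.finrank ℤ (coinvL g) = 1)
    (hgen : coinvL g = Submodule.span ℤ {v})
    (hv6 : Bf v v = -6) :
    (∀ w : Fin 24 → ℤ, (3 : ℤ) ∣ Bf v w) ∧ HasDivisibility v 3 :=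
  stmt7_general g hiso v hgen hv6
end
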